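/- Let f = (f_n)_{n=0}^M be a sequence in X with f_0 + f_1 + ⋯ + f_M = 0. Then for every integer k with 1 ≤ k ≤ M−1, ‖D^k f‖_0 ≤ c_{B,1} · ‖D^{k−1} f‖_0^{1/2} · ‖D^k f‖_1^{1/2}, where c_{B,1} = 2(1 + 2(c_A c_{A,1})²)^{1/2} with c_A = √(2 + √2/2) and c_{A,1} = (1 + (√2 c_A)^{4/3})^{3/4}. Moreover, in the case k = 1 the constant c_{B,1} can be replaced by c_{B,1}/√2. -/

import Mathlib

noncomputable def cA : ℝ := Real.sqrt (2 + Real.sqrt 2 / 2)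
noncomputable def cA1 : ℝ := (1 + (Real.sqrt 2 * cA) ^ ((4:ℝ)/3)) ^ ((3:ℝ)/4)
noncomputable def cB1 : ℝ := 2 * Real.sqrt (1 + 2 * (cA * cA1)^2)

/-- `dAux j = (d̂_j, ∏_{i≤j} d̂_i^{1/(i+1)})`, realizing the recursion (4.20). -/
noncomputable def dAux : ℕ → ℝ × ℝ
  | 0 => (cB1, cB1)
  | (j+1) =>
      let d : ℝ := (1 + (dAux j).1 ^ (2*((j:ℝ)+2))) ^ (((j:ℝ)+2) / (2*((j:ℝ)+1)*((j:ℝ)+3))) *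
                   ((dAux j).2) ^ (((j:ℝ)+2) / (((j:ℝ)+1)*((j:ℝ)+3)))
      (d, (dAux j).2 * d ^ (1/((j:ℝ)+2)))

noncomputable def dHat (j : ℕ) : ℝ := (dAux j).1

/-- `cAux j = (ĉ_j, ∏_{i≤j} ĉ_i^{1/(i+1)})`, realizing the recursion (4.19). -/
noncomputable def cAux : ℕ → ℝ × ℝ
  | 0 => (cB1 / Real.sqrt 2, cB1 / Real.sqrt 2)
  | (j+1) =>
      let c : ℝ := (1 + dHat j ^ (2*((j:ℝ)+2))) ^ (((j:ℝ)+2) / (2*((j:ℝ)+1)*((j:ℝ)+3))) *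
                   ((cAux j).2) ^ (((j:ℝ)+2) / (((j:ℝ)+1)*((j:ℝ)+3)))
      (c, (cAux j).2 * c ^ (1/((j:ℝ)+2)))

noncomputable def cHat (j : ℕ) : ℝ := (cAux j).1

/-- the constant `c_m = ∏_{j=0}^{m-2} ĉ_j^{1/(j+1)}` (equal to `1` for `m = 1`). -/
noncomputable def cConst (m : ℕ) : ℝ := ∏ j ∈ Finset.range (m-1), cHat j ^ (1/((j:ℝ)+1))

/-- backward difference quotient of a sequence. -/
noncomputable def Dq {X : Type*} [NormedAddCommGroup X] [NormedSpace ℝ X] (τ : ℝ) (f : ℕ → X) : ℕ → X :=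
  fun n => τ⁻¹ • (f n - f (n - 1))

/-- discrete `L²` norm `(τ Σ_{n=a}^{b} ‖f n‖²)^{1/2}`. -/
noncomputable def seqNorm0 {X : Type*} [NormedAddCommGroup X]
    (τ : ℝ) (a b : ℕ) (f : ℕ → X) : ℝ :=
  Real.sqrt (τ * ∑ n ∈ Finset.Icc a b, ‖f n‖^2)

/-- `T_0 = T` and `T_j = (M+1−j)τ` for `j ≥ 1`. -/
noncomputable def Tk (τ T : ℝ) (M j : ℕ) : ℝ := if j = 0 then T else ((M:ℝ) + 1 - (j:ℝ)) * τ

/-- the scale-invariant norm `‖Dᵏf‖_m = (Σ_{j=k}^{k+m} T_j^{−2(m+k−j)} ‖Dʲf‖₀²)^{1/2}`. -/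
noncomputable def normm {X : Type*} [NormedAddCommGroup X] [NormedSpace ℝ X]
    (τ T : ℝ) (M k m : ℕ) (f : ℕ → X) : ℝ :=
  Real.sqrt (∑ j ∈ Finset.Icc k (k+m),
    (seqNorm0 τ j M ((Dq τ)^[j] f))^2 / (Tk τ T M j)^(2*(m+k-j)))

/-!
Write `u = Dᵏ⁻¹f`, `A = ‖u‖₀`, `B = ‖Du‖₀`, `C = ‖D²u‖₀` and `t = T_k`. Summing
`⟪u_n - u_{n-1}, Du_n⟫` by parts gives `B² ≤ ‖u_M‖‖Du_M‖ + ‖u_{k-1}‖‖Du_k‖ + A C`.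
A discrete Agmon inequality (compare `‖u_n‖²` with the minimum of `‖u‖²` over the interval
and telescope) bounds the boundary values by `‖u_n‖² ≤ A²/t + 2AB` and
`‖Du_n‖² ≤ B²/t + 2BC`. Since `B/t` and `C` are at most `‖Du‖₁`, the resulting scalar
inequality forces `B² ≤ 32 A ‖Du‖₁`. As `32 ≤ c_{B,1}²/2`, the constant `c_{B,1}/√2` works
for every `k`, not only for `k = 1`.
-/

open Finset RealInnerProductSpace

lemma abs_sq_norm_sub_sq_norm_le {E : Type*} [SeminormedAddCommGroup E] (x y : E) :
    |‖x‖ ^ 2 - ‖y‖ ^ 2| ≤ ‖x - y‖ * (‖x‖ + ‖y‖) := by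
  rw [sq_sub_sq, abs_mul, abs_of_nonneg (by positivity), mul_comm]
  exact mul_le_mul_of_nonneg_right (abs_norm_sub_norm_le x y) (by positivity)

lemma abs_sub_le_sum_Ico_abs_sub (e : ℕ → ℝ) {a b m n : ℕ} (hm : m ∈ Icc a b)
    (hn : n ∈ Icc a b) : |e n - e m| ≤ ∑ i ∈ Ico a b, |e (i + 1) - e i| := by
  wlog hmn : m ≤ n generalizing m n
  · rw [abs_sub_comm]; exact this hn hm (by omega)
  rw [mem_Icc] at hm hn
  calc |e n - e m| = |∑ i ∈ Ico m n, (e (i + 1) - e i)| := by rw [sum_Ico_sub e hmn]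
    _ ≤ ∑ i ∈ Ico m n, |e (i + 1) - e i| := abs_sum_le_sum_abs _ _
    _ ≤ ∑ i ∈ Ico a b, |e (i + 1) - e i| :=
      sum_le_sum_of_subset_of_nonneg (Ico_subset_Ico hm.1 hn.2) fun _ _ _ => abs_nonneg _

lemma sum_Ico_comp_succ {M : Type*} [AddCommMonoid M] (p : ℕ → M) (a b : ℕ) :
    ∑ i ∈ Ico a b, p (i + 1) = ∑ i ∈ Icc (a + 1) b, p i := by
  rw [sum_Ico_add', Ico_add_one_right_eq_Icc]

lemma mul_sum_mul_le_sqrt_mul_sqrt {ι : Type*} {τ : ℝ} (hτ : 0 ≤ τ) (s : Finset ι)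
    (p q : ι → ℝ) :
    τ * ∑ i ∈ s, p i * q i ≤ √(τ * ∑ i ∈ s, p i ^ 2) * √(τ * ∑ i ∈ s, q i ^ 2) := by
  rw [Real.sqrt_mul hτ, Real.sqrt_mul hτ, mul_mul_mul_comm, Real.mul_self_sqrt hτ]
  exact mul_le_mul_of_nonneg_left (Real.sum_mul_le_sqrt_mul_sqrt s p q) hτ

lemma le_mul_rpow_half_mul_rpow_half {x c a n : ℝ} (hc : 0 ≤ c) (ha : 0 ≤ a)
    (h : x ^ 2 ≤ c ^ 2 * (a * n)) : x ≤ c * a ^ (1 / 2 : ℝ) * n ^ (1 / 2 : ℝ) := by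
  rw [← Real.sqrt_eq_rpow, ← Real.sqrt_eq_rpow, mul_assoc, ← Real.sqrt_mul ha,
    ← Real.sqrt_sq hc, ← Real.sqrt_mul (sq_nonneg c)]
  exact Real.le_sqrt_of_sq_le h

lemma sum_Ico_inner_sub_eq {X : Type*} [NormedAddCommGroup X] [InnerProductSpace ℝ X]
    (u w : ℕ → X) {j M : ℕ} (h : j < M) :
    ∑ n ∈ Ico j M, ⟪u (n + 1) - u n, w (n + 1)⟫ =
      ⟪u M, w M⟫ - ⟪u j, w (j + 1)⟫ - ∑ n ∈ Ico (j + 1) M, ⟪u n, w (n + 1) - w n⟫ := by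
  induction M, h using Nat.le_induction with
  | base => simp [inner_sub_left]
  | succ M hM ih =>
    rw [sum_Ico_succ_top (by omega), sum_Ico_succ_top hM, ih]
    simp only [inner_sub_left, inner_sub_right]
    ring

section seqNorm0

variable {X : Type*} [NormedAddCommGroup X] {τ : ℝ}

lemma seqNorm0_sq (hτ : 0 ≤ τ) (a b : ℕ) (u : ℕ → X) :
    seqNorm0 τ a b u ^ 2 = τ * ∑ n ∈ Icc a b, ‖u n‖ ^ 2 :=
  Real.sq_sqrt (mul_nonneg hτ (sum_nonneg fun _ _ => sq_nonneg _))

lemma sqrt_mul_sum_le_seqNorm0 (hτ : 0 ≤ τ) {s : Finset ℕ} {a b : ℕ} (hs : s ⊆ Icc a b)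
    (u : ℕ → X) : √(τ * ∑ n ∈ s, ‖u n‖ ^ 2) ≤ seqNorm0 τ a b u := by
  unfold seqNorm0
  gcongr

lemma sqrt_mul_sum_Ico_succ_eq (a b : ℕ) (u : ℕ → X) :
    √(τ * ∑ n ∈ Ico a b, ‖u (n + 1)‖ ^ 2) = seqNorm0 τ (a + 1) b u := by
  rw [sum_Ico_comp_succ (fun n => ‖u n‖ ^ 2)]
  rfl

end seqNorm0

section Dq

variable {X : Type*} [NormedAddCommGroup X] [NormedSpace ℝ X] {τ : ℝ}

lemma smul_Dq_succ (hτ : τ ≠ 0) (u : ℕ → X) (n : ℕ) :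
    τ • Dq τ u (n + 1) = u (n + 1) - u n := by
  simp [Dq, smul_inv_smul₀ hτ]

lemma sq_norm_le_agmon (hτ : 0 < τ) (u : ℕ → X) {a b n : ℕ}
    (hn : n ∈ Icc a b) {L : ℝ} (hL : 0 < L) (hLb : L ≤ ((b : ℝ) + 1 - a) * τ) :
    ‖u n‖ ^ 2 ≤ seqNorm0 τ a b u ^ 2 / L +
      2 * seqNorm0 τ a b u * seqNorm0 τ (a + 1) b (Dq τ u) := by
  set A := seqNorm0 τ a b u
  set V := seqNorm0 τ (a + 1) b (Dq τ u)
  have hab : a ≤ b := (mem_Icc.1 hn).1.trans (mem_Icc.1 hn).2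
  obtain ⟨m, hm, hmin⟩ :=
    (Icc a b).exists_min_image (fun i => ‖u i‖ ^ 2) (nonempty_Icc.2 hab)
  have h_min : ‖u m‖ ^ 2 ≤ A ^ 2 / L := by
    have hcard := card_nsmul_le_sum _ _ _ hmin
    rw [Nat.card_Icc, nsmul_eq_mul, Nat.cast_sub (by omega)] at hcard
    push_cast at hcard
    rw [le_div_iff₀ hL, seqNorm0_sq hτ.le]
    calc ‖u m‖ ^ 2 * L ≤ ‖u m‖ ^ 2 * (((b : ℝ) + 1 - a) * τ) := by gcongr
      _ ≤ _ := by nlinarith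
  have h_step (i : ℕ) : |‖u (i + 1)‖ ^ 2 - ‖u i‖ ^ 2| ≤
      τ * (‖Dq τ u (i + 1)‖ * ‖u (i + 1)‖) + τ * (‖Dq τ u (i + 1)‖ * ‖u i‖) := by
    have h := abs_sq_norm_sub_sq_norm_le (u (i + 1)) (u i)
    rw [← smul_Dq_succ hτ.ne', norm_smul, Real.norm_of_nonneg hτ.le] at h
    linarith
  have hCS (v : ℕ → ℝ) (hv : √(τ * ∑ i ∈ Ico a b, v i ^ 2) ≤ A) :
      τ * ∑ i ∈ Ico a b, ‖Dq τ u (i + 1)‖ * v i ≤ V * A :=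
    (mul_sum_mul_le_sqrt_mul_sqrt hτ.le _ _ _).trans
      (by rw [sqrt_mul_sum_Ico_succ_eq]; exact mul_le_mul_of_nonneg_left hv (Real.sqrt_nonneg _))
  have h_var : ‖u n‖ ^ 2 - ‖u m‖ ^ 2 ≤ 2 * A * V :=
    calc ‖u n‖ ^ 2 - ‖u m‖ ^ 2 ≤ |‖u n‖ ^ 2 - ‖u m‖ ^ 2| := le_abs_self _
      _ ≤ ∑ i ∈ Ico a b, |‖u (i + 1)‖ ^ 2 - ‖u i‖ ^ 2| :=
        abs_sub_le_sum_Ico_abs_sub (fun i => ‖u i‖ ^ 2) hm hn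
      _ ≤ τ * ∑ i ∈ Ico a b, ‖Dq τ u (i + 1)‖ * ‖u (i + 1)‖ +
          τ * ∑ i ∈ Ico a b, ‖Dq τ u (i + 1)‖ * ‖u i‖ := by
        rw [mul_sum, mul_sum, ← sum_add_distrib]
        exact sum_le_sum fun i _ => h_step i
      _ ≤ V * A + V * A := add_le_add
        (hCS _ ((sqrt_mul_sum_Ico_succ_eq a b u).trans_le
          (sqrt_mul_sum_le_seqNorm0 hτ.le (Icc_subset_Icc (by omega) le_rfl) u)))
        (hCS _ (sqrt_mul_sum_le_seqNorm0 hτ.le Ico_subset_Icc_self u))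
      _ = 2 * A * V := by ring
  linarith

end Dq

lemma sq_le_of_le_two_sqrt_mul_sqrt_add {A B C t N : ℝ} (hA : 0 ≤ A) (hB : 0 ≤ B)
    (hC : 0 ≤ C) (ht : 0 < t) (hBN : B ≤ t * N) (hCN : C ≤ N)
    (h : B ^ 2 ≤ 2 * (√(A ^ 2 / t + 2 * A * B) * √(B ^ 2 / t + 2 * B * C)) + A * C) :
    B ^ 2 ≤ 32 * (A * N) := by
  have hN : 0 ≤ N := hC.trans hCN
  have hBt : B / t ≤ N := (div_le_iff₀' ht).2 hBN
  have hβ : B ^ 2 / t + 2 * B * C ≤ 3 * (B * N) := by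
    rw [sq, mul_div_assoc]
    nlinarith [mul_le_mul_of_nonneg_left hBt hB, mul_le_mul_of_nonneg_left hCN hB]
  have hprod : (A ^ 2 / t + 2 * A * B) * (B ^ 2 / t + 2 * B * C) ≤
      3 * (A * N) ^ 2 + 6 * (A * N) * B ^ 2 :=
    calc _ ≤ (A ^ 2 / t + 2 * A * B) * (3 * (B * N)) := by gcongr
      _ = 3 * (A ^ 2 * N) * (B / t) + 6 * (A * N) * B ^ 2 := by ring
      _ ≤ 3 * (A ^ 2 * N) * N + 6 * (A * N) * B ^ 2 := by gcongr
      _ = _ := by ring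
  set s := √(A ^ 2 / t + 2 * A * B) * √(B ^ 2 / t + 2 * B * C)
  have hs : s ^ 2 ≤ 3 * (A * N) ^ 2 + 6 * (A * N) * B ^ 2 := by
    rwa [mul_pow, Real.sq_sqrt (by positivity), Real.sq_sqrt (by positivity)]
  nlinarith [mul_le_mul_of_nonneg_left hCN hA, mul_nonneg hA hN, Real.sqrt_nonneg
    (A ^ 2 / t + 2 * A * B), Real.sqrt_nonneg (B ^ 2 / t + 2 * B * C)]

section SummationByParts

variable {X : Type*} [NormedAddCommGroup X] [InnerProductSpace ℝ X] {τ : ℝ}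

lemma sq_seqNorm0_Dq_le_boundary_add (hτ : 0 < τ) (u : ℕ → X) {j M : ℕ} (h : j < M) :
    seqNorm0 τ (j + 1) M (Dq τ u) ^ 2 ≤ ‖u M‖ * ‖Dq τ u M‖ + ‖u j‖ * ‖Dq τ u (j + 1)‖ +
      seqNorm0 τ j M u * seqNorm0 τ (j + 2) M (Dq τ (Dq τ u)) := by
  set w := Dq τ u
  have h_sbp : seqNorm0 τ (j + 1) M w ^ 2 = ⟪u M, w M⟫ - ⟪u j, w (j + 1)⟫ -
      τ * ∑ n ∈ Ico (j + 1) M, ⟪u n, Dq τ w (n + 1)⟫ := by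
    calc seqNorm0 τ (j + 1) M w ^ 2 = ∑ n ∈ Ico j M, ⟪u (n + 1) - u n, w (n + 1)⟫ := by
          rw [seqNorm0_sq hτ.le, ← sum_Ico_comp_succ (fun n => ‖w n‖ ^ 2), mul_sum]
          refine sum_congr rfl fun n _ => ?_
          rw [← smul_Dq_succ hτ.ne', real_inner_smul_left, real_inner_self_eq_norm_sq]
      _ = _ := by
          rw [sum_Ico_inner_sub_eq u w h, mul_sum]
          congr 1
          refine sum_congr rfl fun n _ => ?_
          rw [← smul_Dq_succ hτ.ne' w, real_inner_smul_right]
  have h_rest : -(τ * ∑ n ∈ Ico (j + 1) M, ⟪u n, Dq τ w (n + 1)⟫) ≤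
      seqNorm0 τ j M u * seqNorm0 τ (j + 2) M (Dq τ w) :=
    calc _ ≤ τ * ∑ n ∈ Ico (j + 1) M, ‖u n‖ * ‖Dq τ w (n + 1)‖ := by
          rw [← mul_neg, ← sum_neg_distrib]
          gcongr with n
          exact (neg_le_abs _).trans (abs_real_inner_le_norm _ _)
      _ ≤ _ := (mul_sum_mul_le_sqrt_mul_sqrt hτ.le _ _ _).trans <| by
          rw [sqrt_mul_sum_Ico_succ_eq]
          exact mul_le_mul_of_nonneg_right (sqrt_mul_sum_le_seqNorm0 hτ.le
            (Ico_subset_Icc_self.trans (Icc_subset_Icc (Nat.le_succ j) le_rfl)) u)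
            (Real.sqrt_nonneg _)
  linarith [real_inner_le_norm (u M) (w M),
    (neg_le_abs _).trans (abs_real_inner_le_norm (u j) (w (j + 1)))]

lemma sq_seqNorm0_Dq_le (hτ : 0 < τ) (u : ℕ → X) {j M : ℕ} (h : j < M) {t N : ℝ} (ht : 0 < t)
    (htM : t ≤ ((M : ℝ) - j) * τ) (hBN : seqNorm0 τ (j + 1) M (Dq τ u) ≤ t * N)
    (hCN : seqNorm0 τ (j + 2) M (Dq τ (Dq τ u)) ≤ N) :
    seqNorm0 τ (j + 1) M (Dq τ u) ^ 2 ≤ 32 * (seqNorm0 τ j M u * N) := by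
  set A := seqNorm0 τ j M u
  set B := seqNorm0 τ (j + 1) M (Dq τ u)
  set C := seqNorm0 τ (j + 2) M (Dq τ (Dq τ u))
  have hu {n : ℕ} (hn : n ∈ Icc j M) : ‖u n‖ ≤ √(A ^ 2 / t + 2 * A * B) :=
    Real.le_sqrt_of_sq_le (sq_norm_le_agmon hτ u hn ht (by linarith))
  have hw {n : ℕ} (hn : n ∈ Icc (j + 1) M) : ‖Dq τ u n‖ ≤ √(B ^ 2 / t + 2 * B * C) :=
    Real.le_sqrt_of_sq_le (sq_norm_le_agmon hτ (Dq τ u) hn ht (by push_cast; linarith))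
  have h_end := mul_le_mul (hu (right_mem_Icc.2 h.le)) (hw (right_mem_Icc.2 h))
    (norm_nonneg _) (Real.sqrt_nonneg _)
  have h_start := mul_le_mul (hu (left_mem_Icc.2 h.le)) (hw (left_mem_Icc.2 h))
    (norm_nonneg _) (Real.sqrt_nonneg _)
  have h_main : B ^ 2 ≤ 2 * (√(A ^ 2 / t + 2 * A * B) * √(B ^ 2 / t + 2 * B * C)) + A * C := by
    linarith [sq_seqNorm0_Dq_le_boundary_add hτ u h]
  exact sq_le_of_le_two_sqrt_mul_sqrt_add (Real.sqrt_nonneg _) (Real.sqrt_nonneg _)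
    (Real.sqrt_nonneg _) ht hBN hCN h_main

end SummationByParts

section normm

variable {X : Type*} [NormedAddCommGroup X] [NormedSpace ℝ X] {τ T : ℝ} {M j : ℕ}
  {f : ℕ → X}

lemma normm_one_eq :
    normm τ T M (j + 1) 1 f = √(seqNorm0 τ (j + 1) M ((Dq τ)^[j + 1] f) ^ 2 /
      Tk τ T M (j + 1) ^ 2 + seqNorm0 τ (j + 2) M ((Dq τ)^[j + 2] f) ^ 2) := by
  rw [normm, sum_Icc_succ_top (Nat.le_succ _), Icc_self, sum_singleton,
    show 2 * (1 + (j + 1) - (j + 1)) = 2 by omega,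
    show 2 * (1 + (j + 1) - (j + 1 + 1)) = 0 by omega, pow_zero, div_one]

lemma seqNorm0_le_Tk_mul_normm_one (ht : 0 < Tk τ T M (j + 1)) :
    seqNorm0 τ (j + 1) M ((Dq τ)^[j + 1] f) ≤ Tk τ T M (j + 1) * normm τ T M (j + 1) 1 f := by
  rw [normm_one_eq, ← div_le_iff₀' ht]
  refine Real.le_sqrt_of_sq_le ?_
  rw [div_pow]
  linarith [sq_nonneg (seqNorm0 τ (j + 2) M ((Dq τ)^[j + 2] f))]

lemma seqNorm0_le_normm_one :
    seqNorm0 τ (j + 2) M ((Dq τ)^[j + 2] f) ≤ normm τ T M (j + 1) 1 f := by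
  rw [normm_one_eq]
  refine Real.le_sqrt_of_sq_le ?_
  have := div_nonneg (sq_nonneg (seqNorm0 τ (j + 1) M ((Dq τ)^[j + 1] f)))
    (sq_nonneg (Tk τ T M (j + 1)))
  linarith

end normm

lemma cB1_nonneg : 0 ≤ cB1 := mul_nonneg zero_le_two (Real.sqrt_nonneg _)

lemma cB1_sq_ge : 64 ≤ cB1 ^ 2 := by
  have hcA : 5 / 2 ≤ cA ^ 2 := by
    rw [cA, Real.sq_sqrt (by positivity)]
    linarith [Real.one_le_sqrt.2 (by norm_num : (1 : ℝ) ≤ 2)]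
  have h_base : 2 ≤ √2 * cA := by
    have hcA0 : 0 ≤ cA := Real.sqrt_nonneg _
    nlinarith [Real.sq_sqrt (show (0 : ℝ) ≤ 2 by norm_num), Real.sqrt_nonneg 2,
      mul_nonneg (Real.sqrt_nonneg 2) hcA0]
  have hz : 2 ≤ (√2 * cA) ^ ((4 : ℝ) / 3) :=
    h_base.trans (Real.self_le_rpow_of_one_le (by linarith) (by norm_num))
  have hcA1 : 3 ≤ cA1 ^ 2 := by
    have h_three : 3 ≤ 1 + (√2 * cA) ^ ((4 : ℝ) / 3) := by linarith
    rw [cA1, ← Real.rpow_natCast, ← Real.rpow_mul (by positivity)]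
    exact h_three.trans (Real.self_le_rpow_of_one_le (by linarith) (by norm_num))
  rw [cB1, mul_pow, Real.sq_sqrt (by positivity), mul_pow]
  nlinarith [mul_le_mul hcA hcA1 (by norm_num) (sq_nonneg cA)]

theorem dq_summation_by_parts_general
    {X : Type*} [NormedAddCommGroup X] [InnerProductSpace ℝ X]
    (T : ℝ) (hT : 0 < T) (M : ℕ) (hM : 0 < M) (τ : ℝ) (hτ : τ = T / M)
    (f : ℕ → X) (k : ℕ) (hk : 1 ≤ k) (hkM : k + 1 ≤ M) :
    (seqNorm0 τ k M ((Dq τ)^[k] f) ≤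
      cB1 * (seqNorm0 τ (k-1) M ((Dq τ)^[k-1] f)) ^ ((1:ℝ)/2) *
        (normm τ T M k 1 f) ^ ((1:ℝ)/2))
    ∧ (k = 1 → seqNorm0 τ 1 M (Dq τ f) ≤
        (cB1 / Real.sqrt 2) * (seqNorm0 τ 0 M f) ^ ((1:ℝ)/2) *
          (normm τ T M 1 1 f) ^ ((1:ℝ)/2)) := by
  have hτ0 : 0 < τ := hτ ▸ div_pos hT (Nat.cast_pos.2 hM)
  obtain ⟨j, rfl⟩ : ∃ j, k = j + 1 := ⟨k - 1, by omega⟩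
  have hTk : Tk τ T M (j + 1) = ((M : ℝ) - j) * τ := by
    rw [Tk, if_neg j.succ_ne_zero]; push_cast; ring
  have ht : 0 < Tk τ T M (j + 1) := by
    rw [hTk]; exact mul_pos (by rw [sub_pos]; exact_mod_cast (by omega : j < M)) hτ0
  have hB : (Dq τ)^[j + 1] f = Dq τ ((Dq τ)^[j] f) := Function.iterate_succ_apply' ..
  have hC : (Dq τ)^[j + 2] f = Dq τ (Dq τ ((Dq τ)^[j] f)) := by
    rw [Function.iterate_succ_apply', hB]
  have h_sq := sq_seqNorm0_Dq_le hτ0 ((Dq τ)^[j] f) (by omega) ht hTk.le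
    (hB ▸ seqNorm0_le_Tk_mul_normm_one ht) (hC ▸ seqNorm0_le_normm_one)
  have h_const : 32 ≤ (cB1 / √2) ^ 2 := by
    rw [div_pow, Real.sq_sqrt zero_le_two]; linarith [cB1_sq_ge]
  have key : seqNorm0 τ (j + 1) M ((Dq τ)^[j + 1] f) ≤ cB1 / √2 *
      seqNorm0 τ (j + 1 - 1) M ((Dq τ)^[j + 1 - 1] f) ^ (1 / 2 : ℝ) *
        normm τ T M (j + 1) 1 f ^ (1 / 2 : ℝ) := by
    rw [hB, Nat.add_sub_cancel]
    exact le_mul_rpow_half_mul_rpow_half (div_nonneg cB1_nonneg (Real.sqrt_nonneg _))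
      (Real.sqrt_nonneg _) (h_sq.trans (mul_le_mul_of_nonneg_right h_const
        (mul_nonneg (Real.sqrt_nonneg _) (Real.sqrt_nonneg _))))
  refine ⟨key.trans ?_, fun hj => ?_⟩
  · have h_le : cB1 / √2 ≤ cB1 := div_le_self cB1_nonneg (Real.one_le_sqrt.2 one_le_two)
    exact mul_le_mul_of_nonneg_right (mul_le_mul_of_nonneg_right h_le
      (Real.rpow_nonneg (Real.sqrt_nonneg _) _)) (Real.rpow_nonneg (Real.sqrt_nonneg _) _)
  · obtain rfl : j = 0 := by omega
    simpa using key

/-- Lemma 4.6: non-periodic summation-by-parts inequality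
`‖Dᵏf‖₀ ≤ c_{B,1} ‖D^{k−1}f‖₀^{1/2} ‖Dᵏf‖₁^{1/2}`; for `k = 1` the constant
can be replaced by `c_{B,1}/√2`. -/
theorem dq_summation_by_parts
    {X : Type*} [NormedAddCommGroup X] [InnerProductSpace ℝ X] [CompleteSpace X]
    (T : ℝ) (hT : 0 < T) (M : ℕ) (hM : 0 < M) (τ : ℝ) (hτ : τ = T / M)
    (f : ℕ → X) (hmean : ∑ n ∈ Finset.range (M + 1), f n = 0)
    (k : ℕ) (hk : 1 ≤ k) (hkM : k + 1 ≤ M) :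
    (seqNorm0 τ k M ((Dq τ)^[k] f) ≤
      cB1 * (seqNorm0 τ (k-1) M ((Dq τ)^[k-1] f)) ^ ((1:ℝ)/2) *
        (normm τ T M k 1 f) ^ ((1:ℝ)/2))
    ∧ (k = 1 → seqNorm0 τ 1 M (Dq τ f) ≤
        (cB1 / Real.sqrt 2) * (seqNorm0 τ 0 M f) ^ ((1:ℝ)/2) *
          (normm τ T M 1 1 f) ^ ((1:ℝ)/2)) :=
  dq_summation_by_parts_general T hT M hM τ hτ f k hk hkM
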